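/- arXiv:1801.07642 — 7 statements merged into one kernel-verified Lean document; each statement's English description precedes it below -/
import Mathlib

section
/- For all real u ≥ v, exp_φ(u) - exp_φ(v) ≤ u - v; consequently |exp_φ(u) - exp_φ(v)| ≤ |u - v| for all real u, v, i.e., exp_φ is 1-Lipschitz. -/
theorem expPhi_lipschitz (expφ : ℝ → ℝ) (hpos : ∀ u, 0 < expφ u)
    (hinv : ∀ u, expφ u - 1 + Real.log (expφ u) = u) :
    (∀ u v : ℝ, v ≤ u → expφ u - expφ v ≤ u - v) ∧
    (∀ u v : ℝ, |expφ u - expφ v| ≤ |u - v|) := by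
  have mono : ∀ u v : ℝ, v ≤ u → expφ v ≤ expφ u := by
    intro u v huv
    by_contra h
    push_neg at h
    have hlog : Real.log (expφ u) < Real.log (expφ v) :=
      Real.log_lt_log (hpos u) h
    have : u < v := by
      calc u = expφ u - 1 + Real.log (expφ u) := (hinv u).symm
        _ < expφ v - 1 + Real.log (expφ v) := by linarith
        _ = v := hinv v
    linarith
  have key : ∀ u v : ℝ, v ≤ u → expφ u - expφ v ≤ u - v := by
    intro u v huv
    have hm := mono u v huv
    have hlog : Real.log (expφ v) ≤ Real.log (expφ u) :=
      Real.log_le_log (hpos v) hm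
    have h1 := hinv u
    have h2 := hinv v
    linarith
  refine ⟨key, fun u v => ?_⟩
  rcases le_total v u with h | h
  · rw [abs_of_nonneg (by linarith [mono u v h]), abs_of_nonneg (by linarith)]
    exact key u v h
  · rw [abs_of_nonpos (by linarith [mono v u h]), abs_of_nonpos (by linarith)]
    linarith [key v u h]
end

section
/- For all real u < 0, e^u ≤ exp_φ(u) ≤ e^{1+u}. -/
theorem expPhi_exp_bounds (expφ : ℝ → ℝ) (hpos : ∀ u, 0 < expφ u)
    (hinv : ∀ u, expφ u - 1 + Real.log (expφ u) = u) :
    ∀ u : ℝ, u < 0 → Real.exp u ≤ expφ u ∧ expφ u ≤ Real.exp (1 + u) := by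
  intro u hu
  have hv := hpos u
  have h := hinv u
  have hlog : Real.log (expφ u) = 1 + u - expφ u := by linarith
  have hexp : Real.exp (Real.log (expφ u)) = expφ u := Real.exp_log hv
  constructor
  · -- v ≤ 1
    have hv1 : expφ u ≤ 1 := by
      by_contra hgt
      push_neg at hgt
      have : 0 < Real.log (expφ u) := Real.log_pos hgt
      linarith
    have : Real.exp u = Real.exp (expφ u - 1) * expφ u := by
      conv_lhs => rw [← h]
      rw [Real.exp_add, hexp]
    rw [this]
    have : Real.exp (expφ u - 1) ≤ 1 := by
      rw [Real.exp_le_one_iff]; linarith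
    nlinarith
  · calc expφ u = Real.exp (Real.log (expφ u)) := hexp.symm
      _ ≤ Real.exp (1 + u) := Real.exp_le_exp.mpr (by linarith)
end

section
/- For all real u, exp_φ(u) ≤ 1 + u/2 + u²/12. -/
/-!
Writing `v = exp_φ u`, so that `u + 3 = v + 2 + log v`, the bound is `12 v - 3 ≤ (v + 2 + log v)²`.
This is trivial for `v ≤ 1/4`. Otherwise it follows from the lower bounds
`log v ≥ 2 (v - 1) / (v + 1)` for `v ≥ 1` (first term of the series of
`log v = 2 artanh ((v - 1) / (v + 1))`) and
`log v ≥ (v - v⁻¹) / 2` for `v ≤ 1` (`sinh t ≤ t` for `t ≤ 0`): in both cases the difference of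
the squares is `(v - 1)²` times a positive polynomial, so equality holds only at `v = 1`, `u = 0`.
-/

open Real

noncomputable def logPhi (v : ℝ) : ℝ := v - 1 + log v

theorem two_mul_div_add_two_le_log_one_add {a : ℝ} (ha : 0 ≤ a) :
    2 * a / (a + 2) ≤ log (1 + a) := by
  have h := le_hasSum (hasSum_log_one_add ha) 0 fun _ _ ↦ by positivity
  simpa [mul_div_assoc] using h

theorem sub_inv_div_two_le_log {x : ℝ} (hx₀ : 0 < x) (hx₁ : x ≤ 1) :
    (x - x⁻¹) / 2 ≤ log x := by
  rw [← sinh_log hx₀]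
  exact sinh_le_self_iff.2 (log_nonpos hx₀.le hx₁)

theorem le_sq_of_sq_mul_le_sq {a c p s : ℝ} (hc : 0 < c) (hp : 0 ≤ p) (hps : p ≤ c * s)
    (hap : c ^ 2 * a ≤ p ^ 2) : a ≤ s ^ 2 := by
  have : c ^ 2 * a ≤ c ^ 2 * s ^ 2 := by
    rw [← mul_pow]
    exact hap.trans (pow_le_pow_left₀ hp hps 2)
  exact le_of_mul_le_mul_left this (by positivity)

theorem le_one_add_logPhi_div_two_add_sq (v : ℝ) :
    v ≤ 1 + logPhi v / 2 + logPhi v ^ 2 / 12 := by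
  suffices 12 * v - 3 ≤ (v + 2 + log v) ^ 2 by
    unfold logPhi
    nlinarith
  rcases le_or_gt v (1 / 4) with hv | hv
  · nlinarith [sq_nonneg (v + 2 + log v)]
  rcases le_or_gt v 1 with hv₁ | hv₁
  · have hlog := sub_inv_div_two_le_log (by linarith) hv₁
    have hmul : 2 * v * ((v - v⁻¹) / 2) = v ^ 2 - 1 := by field_simp
    refine le_sq_of_sq_mul_le_sq (c := 2 * v) (p := 3 * v ^ 2 + 4 * v - 1)
      (by linarith) (by nlinarith) (by nlinarith) ?_
    rw [← sub_nonneg, show (3 * v ^ 2 + 4 * v - 1) ^ 2 - (2 * v) ^ 2 * (12 * v - 3) =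
      ((v - 1) * (3 * v - 1)) ^ 2 by ring]
    positivity
  · have hlog : 2 * (v - 1) / (v + 1) ≤ log v := by
      simpa [show v - 1 + 2 = v + 1 by ring] using
        two_mul_div_add_two_le_log_one_add (sub_nonneg.2 hv₁.le)
    have hmul : (v + 1) * (2 * (v - 1) / (v + 1)) = 2 * (v - 1) := by field_simp
    refine le_sq_of_sq_mul_le_sq (c := v + 1) (p := v * (v + 5))
      (by linarith) (by positivity) (by nlinarith) ?_
    rw [← sub_nonneg, show (v * (v + 5)) ^ 2 - (v + 1) ^ 2 * (12 * v - 3) =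
      (v - 1) ^ 2 * (v ^ 2 + 3) by ring]
    positivity

theorem expPhi_quadratic_bound_general (expφ : ℝ → ℝ)
    (hinv : ∀ u, expφ u - 1 + Real.log (expφ u) = u) :
    ∀ u : ℝ, expφ u ≤ 1 + u / 2 + u ^ 2 / 12 := by
  intro u
  simpa only [logPhi, hinv u] using le_one_add_logPhi_div_two_add_sq (expφ u)

theorem expPhi_quadratic_bound (expφ : ℝ → ℝ) (hpos : ∀ u, 0 < expφ u)
    (hinv : ∀ u, expφ u - 1 + Real.log (expφ u) = u) :
    ∀ u : ℝ, expφ u ≤ 1 + u / 2 + u ^ 2 / 12 :=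
  expPhi_quadratic_bound_general expφ hinv
end

section
/- For all u > 0, (log(1+u))² ≤ (log 2)² + (u-1)² + (u - 1 + log(1+u))·log u. -/
theorem log_sq_ineq (u : ℝ) (hu : 0 < u) :
    (Real.log (1 + u)) ^ 2 ≤
      (Real.log 2) ^ 2 + (u - 1) ^ 2 + (u - 1 + Real.log (1 + u)) * Real.log u := by
  have hu1 : (0:ℝ) < 1 + u := by linarith
  set l := Real.log u with hl
  set L := Real.log (1 + u) with hLdef
  have hM : Real.log ((1+u)/u) = L - l := Real.log_div (by positivity) (ne_of_gt hu)
  set M := Real.log ((1+u)/u) with hMdef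
  have hMnn : 0 ≤ M := Real.log_nonneg (by rw [le_div_iff₀ hu]; linarith)
  have hLnn : 0 ≤ L := Real.log_nonneg (by linarith)
  have hlog2 : Real.log 2 < 0.6931471808 := Real.log_two_lt_d9
  have hlog2' : (0.6931471803 : ℝ) < Real.log 2 := Real.log_two_gt_d9
  have key : M * L ≤ (Real.log 2)^2 + (u-1)^2 + (u-1) * l := by
    rcases le_or_gt (1/10 : ℝ) u with h | h
    · -- tangent-line bounds
      have hMb : M ≤ Real.log 2 - (u-1)/(2*u) := by
        have h1 : Real.log ((1+u)/u/2) ≤ (1+u)/u/2 - 1 :=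
          Real.log_le_sub_one_of_pos (by positivity)
        have h2 : Real.log ((1+u)/u/2) = M - Real.log 2 :=
          Real.log_div (by positivity) (by norm_num)
        rw [h2] at h1
        have h3 : (1+u)/u/2 - 1 = -((u-1)/(2*u)) := by field_simp; ring
        rw [h3] at h1; linarith
      have hLb : L ≤ Real.log 2 + (u-1)/2 := by
        have h1 : Real.log ((1+u)/2) ≤ (1+u)/2 - 1 :=
          Real.log_le_sub_one_of_pos (by positivity)
        have h2 : Real.log ((1+u)/2) = L - Real.log 2 :=
          Real.log_div (by positivity) (by norm_num)
        rw [h2] at h1; linarith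
      have hub1 : 0 ≤ Real.log 2 - (u-1)/(2*u) := le_trans hMnn hMb
      have hprod : M * L ≤ (Real.log 2 - (u-1)/(2*u)) * (Real.log 2 + (u-1)/2) :=
        mul_le_mul hMb hLb hLnn hub1
      have hul : 0 ≤ (u-1) * l := by
        rcases le_or_gt 1 u with h1 | h1
        · exact mul_nonneg (by linarith) (Real.log_nonneg h1)
        · have := Real.log_nonpos hu.le h1.le
          nlinarith
      have hexp : (Real.log 2 - (u-1)/(2*u)) * (Real.log 2 + (u-1)/2)
          ≤ (Real.log 2)^2 + (u-1)^2 + (u-1)*l := by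
        rw [← sub_nonneg]
        have heq : (Real.log 2)^2 + (u-1)^2 + (u-1)*l
            - (Real.log 2 - (u-1)/(2*u)) * (Real.log 2 + (u-1)/2)
            = ((4*u + 1 - 2*Real.log 2)*(u-1)^2 + 4*u*((u-1)*l)) / (4*u) := by
          field_simp
          ring
        rw [heq]
        apply div_nonneg _ (by linarith)
        have h4 : 0 ≤ 4*u + 1 - 2*Real.log 2 := by nlinarith
        nlinarith [sq_nonneg (u-1), mul_nonneg h4 (sq_nonneg (u-1)), mul_nonneg (by linarith : (0:ℝ) ≤ 4*u) hul]
      linarith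
    · -- small u
      have hLle : L ≤ Real.log 2 := by
        apply Real.log_le_log hu1
        linarith
      have hlle : l ≤ 0 := Real.log_nonpos hu.le (by linarith)
      have hstep : M * L ≤ M * Real.log 2 := mul_le_mul_of_nonneg_left hLle hMnn
      have h2nn : (0:ℝ) ≤ Real.log 2 := by linarith
      have hLlog : L * Real.log 2 ≤ (Real.log 2)^2 := by nlinarith
      have hcross : 0 ≤ (u - 1 + Real.log 2) * l := by
        have hc1 : u - 1 + Real.log 2 ≤ 0 := by nlinarith
        nlinarith
      have : M * Real.log 2 = L * Real.log 2 - l * Real.log 2 := by rw [hM]; ring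
      nlinarith [sq_nonneg (u-1)]
  nlinarith [key, hM]
end

section
/- Let f_t(λ, μ) = exp_φ(t·log_φ(λ) + μ) for t > 0, λ > 0, μ ∈ ℝ. If 0 < t ≤ 1 and μ + 2(1-t) + t·log 2 ≥ 0, then (t/2)·λ ≤ f_t(λ, μ). -/
/-!
Since `log_φ` is strictly increasing, it suffices to show `log_φ (t λ / 2) ≤ t log_φ λ + μ`.
After inserting the bound on `μ` this becomes
`log t + (1 - t) log λ ≤ t λ / 2 - (1 - t) + (1 - t) log 2`.
The tangent-line bound `log y ≤ y - 1` at `y = t λ / (2 (1 - t))` handles the `λ`-dependence,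
and what is left over is `-(t log t + (1 - t) log (1 - t))`, the binary entropy of `t`,
which is nonnegative.
-/

open Real Set

noncomputable def logφ (v : ℝ) : ℝ := v - 1 + log v

lemma logφ_strictMonoOn : StrictMonoOn logφ (Ioi 0) := fun _ ha _ _ hab =>
  add_lt_add (sub_lt_sub_right hab 1) (strictMonoOn_log ha (mem_Ioi.2 (ha.trans hab)) hab)

lemma mul_log_le_sub_add_mul_log {a x : ℝ} (ha : 0 ≤ a) (hx : 0 < x) :
    a * log x ≤ x - a + a * log a := by
  obtain rfl | ha := ha.eq_or_lt
  · simpa using hx.le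
  have h := mul_le_mul_of_nonneg_left (log_le_sub_one_of_pos (div_pos hx ha)) ha.le
  rw [log_div hx.ne' ha.ne', mul_sub_one, mul_div_cancel₀ x ha.ne'] at h
  linarith

lemma log_add_one_sub_mul_log_le {t l : ℝ} (ht : 0 < t) (ht1 : t ≤ 1) (hl : 0 < l) :
    log t + (1 - t) * log l ≤ t * l / 2 - (1 - t) + (1 - t) * log 2 := by
  have htangent := mul_log_le_sub_add_mul_log (sub_nonneg.2 ht1) (show 0 < t * l / 2 by positivity)
  rw [log_div (by positivity) two_ne_zero, log_mul ht.ne' hl.ne'] at htangent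
  have hentropy := binEntropy_nonneg ht.le ht1
  rw [binEntropy, log_inv, log_inv] at hentropy
  linarith

lemma logφ_half_mul_le {t l : ℝ} (ht : 0 < t) (ht1 : t ≤ 1) (hl : 0 < l) :
    logφ (t / 2 * l) ≤ t * logφ l - 2 * (1 - t) - t * log 2 := by
  have key := log_add_one_sub_mul_log_le ht ht1 hl
  rw [logφ, logφ, log_mul (by positivity) hl.ne', log_div ht.ne' two_ne_zero]
  linarith

theorem ft_lower_bound (expφ : ℝ → ℝ) (hpos : ∀ u, 0 < expφ u)
    (hinv : ∀ u, expφ u - 1 + Real.log (expφ u) = u) :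
    ∀ t l μ : ℝ, 0 < t → t ≤ 1 → 0 < l →
      0 ≤ μ + 2 * (1 - t) + t * Real.log 2 →
      t / 2 * l ≤ expφ (t * (l - 1 + Real.log l) + μ) := by
  intro t l μ ht ht1 hl hμ
  have hlog : logφ (expφ (t * logφ l + μ)) = t * logφ l + μ := hinv _
  refine (logφ_strictMonoOn.le_iff_le (by positivity : 0 < t / 2 * l) (hpos _)).1 ?_
  change _ ≤ logφ (expφ (t * logφ l + μ))
  rw [hlog]
  linarith [logφ_half_mul_le ht ht1 hl]
end

section
/- Let f_t(λ, μ) = exp_φ(t·log_φ(λ) + μ) for 0 < t < 1, λ > 0, μ ∈ ℝ. Then f_t(λ, μ) ≤ t·λ + γ, where γ = exp(1 + (μ - t·log t)/(1 - t)). -/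
theorem ft_upper_bound (expφ : ℝ → ℝ) (hpos : ∀ u, 0 < expφ u)
    (hinv : ∀ u, expφ u - 1 + Real.log (expφ u) = u) :
    ∀ t l μ : ℝ, 0 < t → t < 1 → 0 < l →
      expφ (t * (l - 1 + Real.log l) + μ) ≤
        t * l + Real.exp (1 + (μ - t * Real.log t) / (1 - t)) := by
  intro t l μ ht ht1 hl
  set γ := Real.exp (1 + (μ - t * Real.log t) / (1 - t)) with hγ
  by_contra h
  push_neg at h
  set v := expφ (t * (l - 1 + Real.log l) + μ) with hv
  have hvpos : 0 < v := hpos _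
  have heq : v - 1 + Real.log v = t * (l - 1 + Real.log l) + μ := hinv _
  have hγpos : 0 < γ := Real.exp_pos _
  have h1t : 0 < 1 - t := by linarith
  have hlv : l < v / t := (lt_div_iff₀ ht).mpr (by nlinarith)
  have hlogl : Real.log l < Real.log v - Real.log t := by
    have := Real.log_lt_log hl hlv
    rwa [Real.log_div hvpos.ne' ht.ne'] at this
  have hlogγ : (1 - t) * Real.log γ = (1 - t) + (μ - t * Real.log t) := by
    rw [hγ, Real.log_exp]; field_simp
  have hkey : (1 - t) * Real.log v < (1 - t) * Real.log γ - γ := by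
    nlinarith [heq, hlogl, h, hlogγ]
  have hlogvγ : Real.log v < Real.log γ := by
    nlinarith
  have : v < γ := by
    have := Real.exp_lt_exp.mpr hlogvγ
    rwa [Real.exp_log hvpos, Real.exp_log hγpos] at this
  nlinarith
end

section
/- For all real u, (exp_φ(u))² ≤ 1 + u·exp_φ(u), with equality if and only if u = 0. -/
theorem expPhi_sq_bound (expφ : ℝ → ℝ) (hpos : ∀ u, 0 < expφ u)
    (hinv : ∀ u, expφ u - 1 + Real.log (expφ u) = u) :
    ∀ u : ℝ, (expφ u) ^ 2 ≤ 1 + u * expφ u ∧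
      ((expφ u) ^ 2 = 1 + u * expφ u ↔ u = 0) := by
  intro u
  have hv0 : 0 < expφ u := hpos u
  have hu : expφ u - 1 + Real.log (expφ u) = u := hinv u
  set v := expφ u with hv
  -- key inequality: v - 1 ≤ v * log v
  have h1 : Real.log v⁻¹ ≤ v⁻¹ - 1 := Real.log_le_sub_one_of_pos (by positivity)
  rw [Real.log_inv] at h1
  have key : v - 1 ≤ v * Real.log v := by
    have := mul_le_mul_of_nonneg_left h1 hv0.le
    have hvne : v ≠ 0 := ne_of_gt hv0
    field_simp at this
    nlinarith
  constructor
  · nlinarith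
  constructor
  · intro h
    have heq : v * Real.log v = v - 1 := by nlinarith
    have hv1 : v = 1 := by
      by_contra hne
      have hne' : v⁻¹ ≠ 1 := by
        simp [inv_eq_one]; exact hne
      have h2 : Real.log v⁻¹ < v⁻¹ - 1 :=
        Real.log_lt_sub_one_of_pos (by positivity) hne'
      rw [Real.log_inv] at h2
      have := mul_lt_mul_of_pos_left h2 hv0
      have hvne : v ≠ 0 := ne_of_gt hv0
      field_simp at this
      nlinarith
    rw [hv1] at hu
    simp at hu
    linarith
  · intro h
    have hv1 : v = 1 := by
      rcases lt_trichotomy v 1 with hlt | heq | hgt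
      · have := Real.log_neg hv0 hlt
        linarith
      · exact heq
      · have := Real.log_pos hgt
        linarith
    rw [hv1] at hu ⊢
    simp at hu
    nlinarith
end
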